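/- arXiv:2604.10032 — 2 statements merged into one kernel-verified Lean document; each statement's English description precedes it below -/
import Mathlib

section
/- Let W0 ∈ ℝ^{p×n}, let c ∈ ℝ^n be a target concept vector, v* ∈ ℝ^p a desired target output, and C_pres ∈ ℝ^{n×m} a matrix of preserved concept embeddings. Set N = c cᵀ + C_pres C_presᵀ and assume N is positive definite (hence invertible). Define the UCE update ΔW = (v* − W0 c) cᵀ N^{-1} ∈ ℝ^{p×n}. Suppose p ∈ ℝ^n is a preserved vector and λ > 0 is such that cᵀ N^{-1} p ≥ λ · (cᵀ N^{-1} c). Then ‖ΔW p‖₂ ≥ λ · ‖ΔW c‖₂, i.e., the perturbation on the preserved vector p is at least λ times the perturbation on the target vector c. -/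
open Matrix

/-! The update `ΔW = u wᵀ` with `u = v* − W0 c` and `wᵀ = cᵀ N⁻¹` has rank one, so
`ΔW x = (w ⬝ x) u` and `‖ΔW x‖ = |w ⬝ x| ‖u‖`. Since `N⁻¹` is positive definite, `w ⬝ c ≥ 0`,
whence `‖ΔW p‖ ≥ (w ⬝ p) ‖u‖ ≥ λ (w ⬝ c) ‖u‖ = λ ‖ΔW c‖`. -/

/-- Euclidean (ℓ²) norm of a real vector. -/
noncomputable def euclidNorm {n : ℕ} (v : Fin n → ℝ) : ℝ :=
  ‖(WithLp.equiv 2 (Fin n → ℝ)).symm v‖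

lemma euclidNorm_smul {n : ℕ} (r : ℝ) (v : Fin n → ℝ) :
    euclidNorm (r • v) = |r| * euclidNorm v := by
  simp only [euclidNorm, WithLp.equiv_symm_apply, WithLp.toLp_smul, norm_smul, Real.norm_eq_abs]

lemma euclidNorm_vecMulVec_mulVec {ι : Type*} [Fintype ι] {p : ℕ} (u : Fin p → ℝ)
    (w x : ι → ℝ) : euclidNorm (vecMulVec u w *ᵥ x) = |w ⬝ᵥ x| * euclidNorm u := by
  rw [vecMulVec_mulVec, op_smul_eq_smul, euclidNorm_smul]

lemma Matrix.PosSemidef.vecMul_dotProduct_nonneg {ι R : Type*} [Fintype ι] [CommRing R]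
    [PartialOrder R] [StarRing R] [TrivialStar R] {M : Matrix ι ι R} (hM : M.PosSemidef)
    (x : ι → R) : 0 ≤ x ᵥ* M ⬝ᵥ x := by
  simpa only [star_trivial, dotProduct_mulVec] using hM.dotProduct_mulVec_nonneg x

theorem uce_perturbation_of_preserved_general
    {p n : ℕ}
    (W0 : Matrix (Fin p) (Fin n) ℝ)
    (c : Fin n → ℝ) (vstar : Fin p → ℝ)
    (N : Matrix (Fin n) (Fin n) ℝ)
    (hNpd : N.PosDef)
    (ΔW : Matrix (Fin p) (Fin n) ℝ)
    (hΔW : ΔW = Matrix.vecMulVec (vstar - W0.mulVec c) (Matrix.vecMul c N⁻¹))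
    (pvec : Fin n → ℝ) (lam : ℝ)
    (halign : Matrix.vecMul c N⁻¹ ⬝ᵥ pvec ≥ lam * (Matrix.vecMul c N⁻¹ ⬝ᵥ c)) :
    euclidNorm (ΔW.mulVec pvec) ≥ lam * euclidNorm (ΔW.mulVec c) := by
  subst hΔW
  have hc : 0 ≤ c ᵥ* N⁻¹ ⬝ᵥ c := hNpd.inv.posSemidef.vecMul_dotProduct_nonneg c
  rw [euclidNorm_vecMulVec_mulVec, euclidNorm_vecMulVec_mulVec, abs_of_nonneg hc, ← mul_assoc]
  exact mul_le_mul_of_nonneg_right (halign.le.trans (le_abs_self _)) (norm_nonneg _)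

/-- **Perturbation of Preserved Concepts (UCE).**
Let `N = c cᵀ + C_pres C_presᵀ` be positive definite and
`ΔW = (v* − W0 c) cᵀ N⁻¹` the UCE update.  If a preserved vector `p`
satisfies `cᵀ N⁻¹ p ≥ λ (cᵀ N⁻¹ c)` for some `λ > 0`, then
`‖ΔW p‖₂ ≥ λ ‖ΔW c‖₂`. -/
theorem uce_perturbation_of_preserved
    {p n m : ℕ}
    (W0 : Matrix (Fin p) (Fin n) ℝ)
    (c : Fin n → ℝ) (vstar : Fin p → ℝ)
    (Cpres : Matrix (Fin n) (Fin m) ℝ)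
    (N : Matrix (Fin n) (Fin n) ℝ)
    (hN : N = Matrix.vecMulVec c c + Cpres * Cpresᵀ)
    (hNpd : N.PosDef)
    (ΔW : Matrix (Fin p) (Fin n) ℝ)
    (hΔW : ΔW = Matrix.vecMulVec (vstar - W0.mulVec c) (Matrix.vecMul c N⁻¹))
    (pvec : Fin n → ℝ) (lam : ℝ) (hlam : 0 < lam)
    (halign : Matrix.vecMul c N⁻¹ ⬝ᵥ pvec ≥ lam * (Matrix.vecMul c N⁻¹ ⬝ᵥ c)) :
    euclidNorm (ΔW.mulVec pvec) ≥ lam * euclidNorm (ΔW.mulVec c) :=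
  uce_perturbation_of_preserved_general W0 c vstar N hNpd ΔW hΔW pvec lam halign
end

section
/- Let target concept vectors c_1, …, c_T ∈ ℝ^n with desired outputs v_1, …, v_T ∈ ℝ^p, preserved concept vectors d_1, …, d_m ∈ ℝ^n, and a pretrained map W0 ∈ ℝ^{p×n} be given. Assume the Gram matrix G = Σ_{i=1}^T c_i c_iᵀ + Σ_{j=1}^m d_j d_jᵀ is invertible, and define W* = (Σ_{i=1}^T v_i c_iᵀ + Σ_{j=1}^m W0 d_j d_jᵀ) G^{-1}. Then W* minimizes the UCE objective: for every W ∈ ℝ^{p×n}, Σ_{i=1}^T ‖W* c_i − v_i‖₂² + Σ_{j=1}^m ‖W* d_j − W0 d_j‖₂² ≤ Σ_{i=1}^T ‖W c_i − v_i‖₂² + Σ_{j=1}^m ‖W d_j − W0 d_j‖₂². -/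
open Matrix

/-! The closed form satisfies the normal equations `W* G = Σₖ yₖ xₖᵀ` of the least-squares
problem `min_W Σₖ ‖W xₖ − yₖ‖²`, so the residuals `W* xₖ − yₖ` are orthogonal (summed over `k`)
to every perturbation `(W − W*) xₖ`. Expanding the square, the objective at `W` is the objective
at `W*` plus `Σₖ ‖(W − W*) xₖ‖² ≥ 0`. -/

lemma euclidNorm_sq {n : ℕ} (u : Fin n → ℝ) : euclidNorm u ^ 2 = u ⬝ᵥ u := by
  rw [euclidNorm, EuclideanSpace.norm_eq, Real.sq_sqrt (by positivity)]
  simp [dotProduct, sq]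

lemma dotProduct_mulVec_eq_trace {R m n : Type*} [CommSemiring R] [Fintype m] [Fintype n]
    (r : m → R) (E : Matrix m n R) (x : n → R) :
    r ⬝ᵥ (E *ᵥ x) = trace (vecMulVec r x * Eᵀ) := by
  rw [vecMulVec_mul, vecMul_transpose, trace_vecMulVec]

theorem sum_dotProduct_residual_le_of_mul_gram_eq {ι m n : Type*}
    [Fintype ι] [Fintype m] [Fintype n] (x : ι → n → ℝ) (y : ι → m → ℝ)
    {W₀ : Matrix m n ℝ} (h : W₀ * ∑ i, vecMulVec (x i) (x i) = ∑ i, vecMulVec (y i) (x i))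
    (W : Matrix m n ℝ) :
    ∑ i, (W₀ *ᵥ x i - y i) ⬝ᵥ (W₀ *ᵥ x i - y i)
      ≤ ∑ i, (W *ᵥ x i - y i) ⬝ᵥ (W *ᵥ x i - y i) := by
  set r : ι → m → ℝ := fun i => W₀ *ᵥ x i - y i
  set E := W - W₀
  have normal_eq : ∑ i, vecMulVec (r i) (x i) = 0 := by
    simp only [r, sub_vecMulVec, Finset.sum_sub_distrib, ← mul_vecMulVec, ← Matrix.mul_sum, h,
      sub_self]
  have cross_eq_zero : ∑ i, r i ⬝ᵥ (E *ᵥ x i) = 0 := by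
    simp_rw [dotProduct_mulVec_eq_trace, ← trace_sum, ← Matrix.sum_mul, normal_eq,
      Matrix.zero_mul, trace_zero]
  have split : ∀ i, W *ᵥ x i - y i = r i + E *ᵥ x i := fun i => by
    show _ = W₀ *ᵥ x i - y i + (W - W₀) *ᵥ x i
    rw [sub_mulVec]; abel
  have error_nonneg : 0 ≤ ∑ i, (E *ᵥ x i) ⬝ᵥ (E *ᵥ x i) :=
    Finset.sum_nonneg fun i _ => by simpa using dotProduct_self_star_nonneg (E *ᵥ x i)
  calc ∑ i, r i ⬝ᵥ r i
      ≤ ∑ i, (r i ⬝ᵥ r i + 2 * r i ⬝ᵥ (E *ᵥ x i) + (E *ᵥ x i) ⬝ᵥ (E *ᵥ x i)) := by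
        rw [Finset.sum_add_distrib, Finset.sum_add_distrib, ← Finset.mul_sum, cross_eq_zero]
        linarith
    _ = ∑ i, (W *ᵥ x i - y i) ⬝ᵥ (W *ᵥ x i - y i) := by
        refine Finset.sum_congr rfl fun i _ => ?_
        rw [split, add_dotProduct, dotProduct_add, dotProduct_add,
          dotProduct_comm (E *ᵥ x i) (r i)]
        ring

/-- **The UCE closed-form solution minimizes the UCE objective.**
With Gram matrix `G = Σᵢ cᵢ cᵢᵀ + Σⱼ dⱼ dⱼᵀ` invertible, the matrix
`W* = (Σᵢ vᵢ cᵢᵀ + Σⱼ (W0 dⱼ) dⱼᵀ) G⁻¹` satisfies, for every `W`,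
`Σᵢ ‖W* cᵢ − vᵢ‖² + Σⱼ ‖W* dⱼ − W0 dⱼ‖² ≤ Σᵢ ‖W cᵢ − vᵢ‖² + Σⱼ ‖W dⱼ − W0 dⱼ‖²`. -/
theorem uce_closed_form_minimizes_objective
    {p n T m : ℕ}
    (W0 : Matrix (Fin p) (Fin n) ℝ)
    (c : Fin T → Fin n → ℝ) (v : Fin T → Fin p → ℝ)
    (d : Fin m → Fin n → ℝ)
    (G : Matrix (Fin n) (Fin n) ℝ)
    (hG : G = ∑ i, Matrix.vecMulVec (c i) (c i) + ∑ j, Matrix.vecMulVec (d j) (d j))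
    (hGinv : IsUnit G.det)
    (Wstar : Matrix (Fin p) (Fin n) ℝ)
    (hWstar : Wstar =
      (∑ i, Matrix.vecMulVec (v i) (c i)
        + ∑ j, Matrix.vecMulVec (W0.mulVec (d j)) (d j)) * G⁻¹) :
    ∀ W : Matrix (Fin p) (Fin n) ℝ,
      (∑ i, euclidNorm (Wstar.mulVec (c i) - v i) ^ 2)
        + ∑ j, euclidNorm (Wstar.mulVec (d j) - W0.mulVec (d j)) ^ 2
      ≤ (∑ i, euclidNorm (W.mulVec (c i) - v i) ^ 2)
        + ∑ j, euclidNorm (W.mulVec (d j) - W0.mulVec (d j)) ^ 2 := by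
  intro W
  -- Both groups of data form a single least-squares problem indexed by `Fin T ⊕ Fin m`.
  let x : Fin T ⊕ Fin m → Fin n → ℝ := Sum.elim c d
  let y : Fin T ⊕ Fin m → Fin p → ℝ := Sum.elim v fun j => W0 *ᵥ d j
  have gram : G = ∑ k, vecMulVec (x k) (x k) := by
    rw [hG, Fintype.sum_sum_type]; rfl
  have normal : Wstar * ∑ k, vecMulVec (x k) (x k) = ∑ k, vecMulVec (y k) (x k) := by
    rw [← gram, hWstar, Matrix.mul_assoc, nonsing_inv_mul G hGinv, Matrix.mul_one,
      Fintype.sum_sum_type]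
    rfl
  simpa only [euclidNorm_sq, Fintype.sum_sum_type, x, y, Sum.elim_inl, Sum.elim_inr] using
    sum_dotProduct_residual_le_of_mul_gram_eq x y normal W
end
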